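/- Let X be a finite T0 topological space with specialization order ⪯, and let a₁, a₂, a₃, a₄ ∈ X be pairwise distinct points such that, in X, a₃ ⋖ a₁, a₃ ⋖ a₂ and a₄ ⋖ a₃ (covering relations). Let L := {x ∈ X | ∃ i, j ∈ {1,2,3,4}, a_i ⪯ x ⪯ a_j}, endowed with the subspace topology. Then the map π : L → X₃ defined by π(a_i) = i for i = 1, 2, 3, 4 and π(x) = 3 for every x ∈ L \ {a₁, a₂, a₃, a₄} is continuous. -/

import Mathlib

/-
The specialisation order of a finite T0-space determines its topology: up-sets `{z | c ⪯ z}`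
are open and down-sets `{z | z ⪯ c}` are closed. Among `a₁, …, a₄`, the covering relations
force `a₁` and `a₂` to be maximal and `a₄` to be minimal, so a point of `L` above `a₁`
(resp. `a₂`) is `a₁` (resp. `a₂`) itself and a point of `L` below `a₄` is `a₄`. Hence the
preimages under `π` of the generating opens `{1}`, `{2}` of `X₃` are traces on `L` of up-sets,
and the preimage of `{1, 2, 3} = {4}ᶜ` is the trace of the complement of a down-set.
-/

/-- The specialisation order of a topological space: `x ⪯ y` iff `x ∈ closure {y}`. -/
def specLE {X : Type*} [TopologicalSpace X] (x y : X) : Prop := x ∈ closure ({y} : Set X)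

/-- Strict specialisation: `x ≺ y`. -/
def specLT {X : Type*} [TopologicalSpace X] (x y : X) : Prop := specLE x y ∧ x ≠ y

/-- The covering relation of the specialisation order: `x ⋖ y`. -/
def specCov {X : Type*} [TopologicalSpace X] (x y : X) : Prop :=
  specLT x y ∧ ¬ ∃ z, specLT x z ∧ specLT z y

/-- The space `X₃`: four points (here indexed by `Fin 4`, with `i : Fin 4` denoting the point
`i + 1` of `{1, 2, 3, 4}`), whose open sets are `∅`, `{1}`, `{2}`, `{1,2}`, `{1,2,3}` and
`{1,2,3,4}`; it is the topology generated by `{1}`, `{2}` and `{1,2,3}`. -/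
def topX3 : TopologicalSpace (Fin 4) :=
  TopologicalSpace.generateFrom {{0}, {1}, {0, 1, 2}}

section SpecializationOrder

variable {X : Type*} [TopologicalSpace X]

lemma specLE_iff_specializes {x y : X} : specLE x y ↔ y ⤳ x :=
  specializes_iff_mem_closure.symm

lemma specLE_refl (x : X) : specLE x x :=
  specLE_iff_specializes.2 (specializes_refl x)

lemma specLE_trans {x y z : X} (hxy : specLE x y) (hyz : specLE y z) : specLE x z :=
  specLE_iff_specializes.2
    ((specLE_iff_specializes.1 hyz).trans (specLE_iff_specializes.1 hxy))

lemma specLE_antisymm [T0Space X] {x y : X} (hxy : specLE x y) (hyx : specLE y x) : x = y :=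
  ((specLE_iff_specializes.1 hyx).antisymm (specLE_iff_specializes.1 hxy)).eq

lemma specLT.not_specLE [T0Space X] {x y : X} (h : specLT x y) : ¬ specLE y x :=
  fun hyx => h.2 (specLE_antisymm h.1 hyx)

lemma specCov.not_specLE_of_specCov {c x y : X} (hx : specCov c x) (hy : specCov c y)
    (hxy : x ≠ y) : ¬ specLE x y :=
  fun h => hy.2 ⟨x, hx.1, h, hxy⟩

lemma isOpen_setOf_specLE [AlexandrovDiscrete X] (c : X) : IsOpen {z : X | specLE c z} := by
  simp only [isOpen_iff_forall_specializes, Set.mem_ofPred_eq, specLE_iff_specializes]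
  exact fun _ _ hxy hyc => hxy.trans hyc

lemma isClosed_setOf_specLE (c : X) : IsClosed {z : X | specLE z c} :=
  isClosed_closure

end SpecializationOrder

lemma apply_eq_iff_eq_of_ne {X ι : Type*} {a : ι → X} {L : Set X} {π : L → ι} {c i : ι}
    (hπa : ∀ i (h : a i ∈ L), π ⟨a i, h⟩ = i)
    (hπ : ∀ x (h : x ∈ L), (∀ i, x ≠ a i) → π ⟨x, h⟩ = c) (hic : i ≠ c) {x : X} (hx : x ∈ L) :
    π ⟨x, hx⟩ = i ↔ x = a i := by
  refine ⟨fun hπx => ?_, fun hxa => by subst hxa; exact hπa i hx⟩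
  by_contra hxa
  by_cases hx' : ∃ k, x = a k
  · obtain ⟨k, rfl⟩ := hx'
    exact hxa (hπa k hx ▸ hπx ▸ rfl)
  · exact hic (hπx ▸ hπ x hx fun k hk => hx' ⟨k, hk⟩)

section Hull

variable {X ι : Type*} [TopologicalSpace X] [T0Space X] {a : ι → X} {i j : ι} {x : X}

lemma eq_of_specLE_of_maximal (hmax : ∀ k, specLE (a i) (a k) → k = i)
    (hix : specLE (a i) x) (hxj : specLE x (a j)) : x = a i := by
  obtain rfl := hmax j (specLE_trans hix hxj)
  exact specLE_antisymm hxj hix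

lemma eq_of_specLE_of_minimal (hmin : ∀ k, specLE (a k) (a j) → k = j)
    (hix : specLE (a i) x) (hxj : specLE x (a j)) : x = a j := by
  obtain rfl := hmin i (specLE_trans hix hxj)
  exact specLE_antisymm hxj hix

variable {L : Set X} {π : L → ι} {c : ι}

lemma preimage_singleton_eq_of_maximal
    (hL : L = {x | ∃ i j, specLE (a i) x ∧ specLE x (a j)})
    (hπa : ∀ i (h : a i ∈ L), π ⟨a i, h⟩ = i)
    (hπ : ∀ x (h : x ∈ L), (∀ i, x ≠ a i) → π ⟨x, h⟩ = c) (hic : i ≠ c)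
    (hmax : ∀ k, specLE (a i) (a k) → k = i) :
    π ⁻¹' {i} = Subtype.val ⁻¹' {z | specLE (a i) z} := by
  ext ⟨x, hx⟩
  simp only [Set.mem_preimage, Set.mem_singleton_iff, Set.mem_ofPred_eq,
    apply_eq_iff_eq_of_ne hπa hπ hic]
  refine ⟨fun hxa => hxa ▸ specLE_refl _, fun hix => ?_⟩
  obtain ⟨-, k, -, hxk⟩ := hL ▸ hx
  exact eq_of_specLE_of_maximal hmax hix hxk

lemma preimage_singleton_eq_of_minimal
    (hL : L = {x | ∃ i j, specLE (a i) x ∧ specLE x (a j)})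
    (hπa : ∀ i (h : a i ∈ L), π ⟨a i, h⟩ = i)
    (hπ : ∀ x (h : x ∈ L), (∀ i, x ≠ a i) → π ⟨x, h⟩ = c) (hjc : j ≠ c)
    (hmin : ∀ k, specLE (a k) (a j) → k = j) :
    π ⁻¹' {j} = Subtype.val ⁻¹' {z | specLE z (a j)} := by
  ext ⟨x, hx⟩
  simp only [Set.mem_preimage, Set.mem_singleton_iff, Set.mem_ofPred_eq,
    apply_eq_iff_eq_of_ne hπa hπ hjc]
  refine ⟨fun hxa => hxa ▸ specLE_refl _, fun hxj => ?_⟩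
  obtain ⟨k, -, hkx, -⟩ := hL ▸ hx
  exact eq_of_specLE_of_minimal hmin hkx hxj

end Hull

/-- Indices are shifted by one: `a i` is `a_{i+1}` and `i : Fin 4` is the point `i + 1` of `X₃`,
so the default value `3` of `π` is the index `2`. -/
theorem stmt7 {X : Type*} [tX : TopologicalSpace X] [Finite X] [T0Space X]
    (a : Fin 4 → X) (ha : Function.Injective a)
    (h31 : specCov (a 2) (a 0)) (h32 : specCov (a 2) (a 1)) (h43 : specCov (a 3) (a 2))
    (L : Set X) (hL : L = {x | ∃ i j : Fin 4, specLE (a i) x ∧ specLE x (a j)})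
    (π : L → Fin 4)
    (hπa : ∀ (i : Fin 4) (h : a i ∈ L), π ⟨a i, h⟩ = i)
    (hπ : ∀ (x : X) (h : x ∈ L), (∀ i : Fin 4, x ≠ a i) → π ⟨x, h⟩ = 2) :
    @Continuous L (Fin 4) _ topX3 π := by
  have h43le : specLE (a 3) (a 2) := h43.1.1
  have max0 : ∀ k, specLE (a 0) (a k) → k = 0 := by
    intro k hk
    fin_cases k
    · rfl
    · exact absurd hk (h31.not_specLE_of_specCov h32 (ha.ne (by decide)))
    · exact absurd hk h31.1.not_specLE
    · exact absurd (specLE_trans hk h43le) h31.1.not_specLE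
  have max1 : ∀ k, specLE (a 1) (a k) → k = 1 := by
    intro k hk
    fin_cases k
    · exact absurd hk (h32.not_specLE_of_specCov h31 (ha.ne (by decide)))
    · rfl
    · exact absurd hk h32.1.not_specLE
    · exact absurd (specLE_trans hk h43le) h32.1.not_specLE
  have min3 : ∀ k, specLE (a k) (a 3) → k = 3 := by
    intro k hk
    fin_cases k
    · exact absurd (specLE_trans hk h43le) h31.1.not_specLE
    · exact absurd (specLE_trans hk h43le) h32.1.not_specLE
    · exact absurd hk h43.1.not_specLE
    · rfl
  rw [topX3, continuous_generateFrom_iff]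
  rintro s (rfl | rfl | rfl)
  · rw [preimage_singleton_eq_of_maximal hL hπa hπ (by decide) max0]
    exact (isOpen_setOf_specLE _).preimage continuous_subtype_val
  · rw [preimage_singleton_eq_of_maximal hL hπa hπ (by decide) max1]
    exact (isOpen_setOf_specLE _).preimage continuous_subtype_val
  · have hcompl : ({0, 1, 2} : Set (Fin 4)) = {3}ᶜ := by ext k; fin_cases k <;> simp
    rw [hcompl, Set.preimage_compl, preimage_singleton_eq_of_minimal hL hπa hπ (by decide) min3]
    exact ((isClosed_setOf_specLE _).preimage continuous_subtype_val).isOpen_compl
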